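/- arXiv:1902.03559 — 2 statements merged into one kernel-verified Lean document; each statement's English description precedes it below -/
import Mathlib

section
/- Let $H$ be a Hilbert space, $1\le p<\infty$ and $0<T<\infty$. If $v:[0,T]\to H$ is continuous and has finite $p$-variation norm $\|v\|_{V^p(0,T;H)}$, then for every $h$ with $0<h<T$ one has $\big(\int_0^{T-h}\|v(t+h)-v(t)\|_H^p\,dt\big)^{1/p}\le 2^{1+1/p}\,h^{1/p}\,\|v\|_{V^p(0,T;H)}$. -/
open MeasureTheory ENNReal

/-- The `p`-variation norm of `v : ℝ → H` on the interval `[a, b]`, valued in `ℝ≥0∞`: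
the supremum over all finite partitions `a ≤ t 0 < t 1 < ⋯ < t K ≤ b` of
`(∑_{k<K} ‖v (t (k+1)) - v (t k)‖ ^ p) ^ (1/p)`. -/
noncomputable def pVariationNorm {H : Type*} [NormedAddCommGroup H]
    (p a b : ℝ) (v : ℝ → H) : ℝ≥0∞ :=
  ⨆ (K : ℕ) (t : ℕ → ℝ) (_ : StrictMonoOn t (Set.Iic K))
      (_ : ∀ k ≤ K, t k ∈ Set.Icc a b),
    (∑ k ∈ Finset.range K, (‖v (t (k + 1)) - v (t k)‖₊ : ℝ≥0∞) ^ p) ^ (1 / p)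

/-!
Cut `[0, T - h]` into pieces of length `h` and translate them onto `[0, h]`: with `f` the
extension by zero of `t ↦ ‖v (t + h) - v t‖ ^ p` outside `[0, T - h]`,
`∫₀^{T-h} ‖v (t + h) - v t‖ ^ p dt = ∫₀^h ∑ⱼ f (s + j h) ds`.
For fixed `s` the points `s, s + h, s + 2h, …` lying in `[0, T]` are the nodes of a partition
inside `[0, T]`, so the inner sum is at most `‖v‖_{V^p}^p`. This even gives the bound `h^{1/p} ‖v‖_{V^p}`.
-/

open Finset

theorem intervalIntegral_eq_integral_sum_comp_add_mul {E : Type*} [NormedAddCommGroup E]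
    [NormedSpace ℝ E] {g : ℝ → E} (hg : Integrable g) (h : ℝ) (N : ℕ) :
    ∫ x in (0 : ℝ)..N * h, g x = ∫ s in (0 : ℝ)..h, ∑ j ∈ range N, g (s + j * h) := by
  have hsplit := intervalIntegral.sum_integral_adjacent_intervals (a := fun j : ℕ => j * h)
    (n := N) (μ := volume) fun _ _ => hg.intervalIntegrable
  simp only [Nat.cast_zero, zero_mul] at hsplit
  rw [← hsplit, intervalIntegral.integral_finsetSum fun j _ =>
    (hg.comp_add_right _).intervalIntegrable]
  refine Finset.sum_congr rfl fun j _ => ?_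
  rw [intervalIntegral.integral_comp_add_right]
  push_cast
  ring_nf

theorem intervalIntegral_indicator_Icc {E : Type*} [NormedAddCommGroup E] [NormedSpace ℝ E]
    (f : ℝ → E) {a b c : ℝ} (hab : a ≤ b) (hbc : b ≤ c) :
    ∫ x in a..c, (Set.Icc a b).indicator f x = ∫ x in a..b, f x := by
  rw [intervalIntegral.integral_of_le (hab.trans hbc), intervalIntegral.integral_of_le hab,
    setIntegral_indicator measurableSet_Icc]
  congr 2
  ext x
  simp only [Set.mem_inter_iff, Set.mem_Ioc, Set.mem_Icc]
  constructor
  · rintro ⟨⟨hax, -⟩, -, hxb⟩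
    exact ⟨hax, hxb⟩
  · rintro ⟨hax, hxb⟩
    exact ⟨⟨hax, hxb.trans hbc⟩, hax.le, hxb⟩

section pVariation

variable {H : Type*} [NormedAddCommGroup H] {p a b : ℝ} {v : ℝ → H}

theorem sum_norm_sub_rpow_le_pVariationNorm (hp : 0 < p) (hfin : pVariationNorm p a b v ≠ ⊤)
    {K : ℕ} {t : ℕ → ℝ} (ht : StrictMonoOn t (Set.Iic K))
    (hab : ∀ k ≤ K, t k ∈ Set.Icc a b) :
    ∑ k ∈ range K, ‖v (t (k + 1)) - v (t k)‖ ^ p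
      ≤ (pVariationNorm p a b v).toReal ^ p := by
  set S : ℝ≥0∞ := ∑ k ∈ range K, (‖v (t (k + 1)) - v (t k)‖₊ : ℝ≥0∞) ^ p
  have hS : S ^ (1 / p) ≤ pVariationNorm p a b v :=
    le_iSup_of_le K <| le_iSup_of_le t <| le_iSup_of_le ht <| le_iSup_of_le hab le_rfl
  have hSp : S ≤ pVariationNorm p a b v ^ p := by
    rwa [← ENNReal.rpow_le_rpow_iff (one_div_pos.2 hp), ← ENNReal.rpow_mul,
      mul_one_div_cancel hp.ne', ENNReal.rpow_one]
  have hSreal : S.toReal = ∑ k ∈ range K, ‖v (t (k + 1)) - v (t k)‖ ^ p := by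
    rw [ENNReal.toReal_sum fun k _ => ENNReal.rpow_ne_top_of_nonneg hp.le ENNReal.coe_ne_top]
    simp only [← ENNReal.toReal_rpow, ENNReal.coe_toReal, coe_nnnorm]
  rw [← hSreal, ENNReal.toReal_rpow]
  exact ENNReal.toReal_mono (ENNReal.rpow_ne_top_of_nonneg hp.le hfin) hSp

theorem sum_indicator_norm_sub_rpow_le_pVariationNorm (hp : 0 < p)
    (hfin : pVariationNorm p 0 b v ≠ ⊤) {h s : ℝ} (hh : 0 < h) (hs0 : 0 ≤ s) (hsb : s ≤ b)
    (N : ℕ) :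
    ∑ j ∈ range N,
        (Set.Icc 0 (b - h)).indicator (fun t => ‖v (t + h) - v t‖ ^ p) (s + j * h)
      ≤ (pVariationNorm p 0 b v).toReal ^ p := by
  -- `s + j * h ∈ [0, b - h]` exactly when `j < K`
  set K := ⌊(b - s) / h⌋₊
  have hKh : K * h ≤ b - s := (le_div_iff₀ hh).1 (Nat.floor_le (div_nonneg (by linarith) hh.le))
  have hvanish : ∀ j, K ≤ j → b - h < s + j * h := by
    intro j hj
    have hjK : (K : ℝ) + 1 ≤ j + 1 := by exact_mod_cast Nat.add_le_add_right hj 1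
    have h1 := (div_lt_iff₀ hh).1 ((Nat.lt_floor_add_one ((b - s) / h)).trans_le hjK)
    linarith
  rw [← Finset.sum_subset (range_subset_range.2 (min_le_left N K)) fun j hjN hjK => ?_]
  · have hind : (Set.Icc 0 (b - h)).indicator (fun t => ‖v (t + h) - v t‖ ^ p) ≤
        fun t => ‖v (t + h) - v t‖ ^ p := Set.indicator_le_self' fun _ _ => by positivity
    refine (Finset.sum_le_sum fun (j : ℕ) _ => hind (s + j * h)).trans ?_
    have hmono : StrictMonoOn (fun k : ℕ => s + k * h) (Set.Iic (min N K)) :=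
      fun x _ y _ hxy => by
        simpa using mul_lt_mul_of_pos_right (Nat.cast_lt.2 hxy) hh
    have hmem : ∀ k ≤ min N K, s + k * h ∈ Set.Icc 0 b := fun k hk => by
      have : (k : ℝ) ≤ K := by exact_mod_cast hk.trans (min_le_right N K)
      constructor <;> nlinarith
    refine le_of_eq_of_le (Finset.sum_congr rfl fun k _ => ?_)
      (sum_norm_sub_rpow_le_pVariationNorm hp hfin hmono hmem)
    simp only [Nat.cast_succ, add_one_mul, add_assoc]
  · simp only [Finset.mem_range, lt_min_iff, not_and_or, not_lt] at hjN hjK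
    exact Set.indicator_of_notMem (fun hmem => by
      have := hvanish j (hjK.resolve_left (not_le.2 hjN)); linarith [hmem.2]) _

theorem integral_norm_sub_rpow_le_pVariationNorm (hp : 0 < p)
    (hv : ContinuousOn v (Set.Icc 0 b))
    (hfin : pVariationNorm p 0 b v ≠ ⊤) {h : ℝ} (hh : 0 < h) (hhb : h ≤ b) :
    ∫ t in (0 : ℝ)..(b - h), ‖v (t + h) - v t‖ ^ p
      ≤ h * (pVariationNorm p 0 b v).toReal ^ p := by
  set f : ℝ → ℝ := fun t => ‖v (t + h) - v t‖ ^ p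
  have hf : ContinuousOn f (Set.Icc 0 (b - h)) := by
    refine ((hv.comp (continuous_add_const h).continuousOn fun t ht => ?_).sub
      (hv.mono (Set.Icc_subset_Icc_right (by linarith)))).norm.rpow_const fun _ _ => Or.inr hp.le
    exact ⟨by linarith [ht.1], by linarith [ht.2]⟩
  have hg : Integrable ((Set.Icc 0 (b - h)).indicator f) :=
    (integrable_indicator_iff measurableSet_Icc).2 hf.integrableOn_Icc
  set N := ⌈b / h⌉₊
  have hbN : b - h ≤ N * h := by
    have := (div_le_iff₀ hh).1 (Nat.le_ceil (b / h)); linarith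
  calc ∫ t in (0 : ℝ)..(b - h), f t
      = ∫ s in (0 : ℝ)..h, ∑ j ∈ range N, (Set.Icc 0 (b - h)).indicator f (s + j * h) := by
        rw [← intervalIntegral_indicator_Icc f (by linarith) hbN,
          intervalIntegral_eq_integral_sum_comp_add_mul hg]
    _ ≤ ∫ _ in (0 : ℝ)..h, (pVariationNorm p 0 b v).toReal ^ p := by
      refine intervalIntegral.integral_mono_on hh.le ?_ intervalIntegrable_const
        fun s hs => sum_indicator_norm_sub_rpow_le_pVariationNorm hp hfin hh hs.1
          (by linarith [hs.2]) N
      exact (integrable_finsetSum _ fun j _ => hg.comp_add_right _).intervalIntegrable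
    _ = h * (pVariationNorm p 0 b v).toReal ^ p := by simp

end pVariation

theorem stmt0_general {H : Type*} [NormedAddCommGroup H]
    (p T : ℝ) (hp : 1 ≤ p)
    (v : ℝ → H) (hv : ContinuousOn v (Set.Icc 0 T))
    (hfin : pVariationNorm p 0 T v ≠ ⊤)
    (h : ℝ) (hh0 : 0 < h) (hhT : h < T) :
    (∫ t in (0:ℝ)..(T - h), ‖v (t + h) - v t‖ ^ p) ^ (1 / p)
      ≤ 2 ^ (1 + 1 / p) * h ^ (1 / p) * (pVariationNorm p 0 T v).toReal := by
  have hp0 : 0 < p := by linarith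
  set V := (pVariationNorm p 0 T v).toReal
  have hV : 0 ≤ V := ENNReal.toReal_nonneg
  calc (∫ t in (0 : ℝ)..(T - h), ‖v (t + h) - v t‖ ^ p) ^ (1 / p)
      ≤ (h * V ^ p) ^ (1 / p) :=
        Real.rpow_le_rpow (intervalIntegral.integral_nonneg (by linarith) fun _ _ => by positivity)
          (integral_norm_sub_rpow_le_pVariationNorm hp0 hv hfin hh0 hhT.le) (by positivity)
    _ = h ^ (1 / p) * V := by
      rw [Real.mul_rpow hh0.le (by positivity), ← Real.rpow_mul hV, mul_one_div_cancel hp0.ne',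
        Real.rpow_one]
    _ ≤ 2 ^ (1 + 1 / p) * h ^ (1 / p) * V := by
      rw [mul_assoc]
      exact le_mul_of_one_le_left (by positivity) (Real.one_le_rpow one_le_two (by positivity))

/-- the time-shift estimate for continuous functions of finite `p`-variation:
`(∫_0^{T-h} ‖v(t+h) - v(t)‖^p dt)^{1/p} ≤ 2^{1+1/p} h^{1/p} ‖v‖_{V^p(0,T;H)}`. -/
theorem stmt0 {H : Type*} [NormedAddCommGroup H] [InnerProductSpace ℂ H] [CompleteSpace H]
    (p T : ℝ) (hp : 1 ≤ p) (hT : 0 < T)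
    (v : ℝ → H) (hv : ContinuousOn v (Set.Icc 0 T))
    (hfin : pVariationNorm p 0 T v ≠ ⊤)
    (h : ℝ) (hh0 : 0 < h) (hhT : h < T) :
    (∫ t in (0:ℝ)..(T - h), ‖v (t + h) - v t‖ ^ p) ^ (1 / p)
      ≤ 2 ^ (1 + 1 / p) * h ^ (1 / p) * (pVariationNorm p 0 T v).toReal :=
  stmt0_general p T hp v hv hfin h hh0 hhT
end

section
/- Let $H$ be a complex Hilbert space, $0<T<\infty$, and let $a,b:[0,T]\to H$ be continuous with finite $2$-variation norms $\|a\|_{V^2(0,T;H)}$ and $\|b\|_{V^2(0,T;H)}$. Then for every $h$ with $0<h<T$, $\int_0^{T-h}\big|\langle a(t+h),b(t+h)\rangle_H-\langle a(t),b(t)\rangle_H\big|\,dt\;\le\;2^{3/2}\,T^{1/2}\,h^{1/2}\Big(\|a\|_{V^2(0,T;H)}\sup_{t\in[0,T]}\|b(t)\|_H+\|b\|_{V^2(0,T;H)}\sup_{t\in[0,T]}\|a(t)\|_H\Big)$. -/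
open MeasureTheory ENNReal

lemma sum_sq_le_pvar {H : Type*} [NormedAddCommGroup H] (T : ℝ) (f : ℝ → H)
    (hfin : pVariationNorm 2 0 T f ≠ ⊤)
    {K : ℕ} {t : ℕ → ℝ} (ht1 : StrictMonoOn t (Set.Iic K))
    (ht2 : ∀ k ≤ K, t k ∈ Set.Icc 0 T) :
    ∑ k ∈ Finset.range K, ‖f (t (k + 1)) - f (t k)‖ ^ 2
      ≤ (pVariationNorm 2 0 T f).toReal ^ 2 := by
  set X : ℝ≥0∞ := ∑ k ∈ Finset.range K, (‖f (t (k + 1)) - f (t k)‖₊ : ℝ≥0∞) ^ (2:ℝ) with hX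
  have h1 : X ^ ((1:ℝ)/2) ≤ pVariationNorm 2 0 T f := by
    refine le_iSup_of_le K ?_
    refine le_iSup_of_le t ?_
    refine le_iSup_of_le ht1 ?_
    exact le_iSup_of_le ht2 le_rfl
  have h2 : X ≤ (pVariationNorm 2 0 T f) ^ (2:ℝ) := by
    have := ENNReal.rpow_le_rpow h1 (by norm_num : (0:ℝ) ≤ 2)
    rwa [← ENNReal.rpow_mul, one_div, inv_mul_cancel₀ (by norm_num : (2:ℝ) ≠ 0),
      ENNReal.rpow_one] at this
  have hXne : ∀ k ∈ Finset.range K, (‖f (t (k + 1)) - f (t k)‖₊ : ℝ≥0∞) ^ (2:ℝ) ≠ ⊤ :=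
    fun k _ => ENNReal.rpow_ne_top_of_nonneg (by norm_num) ENNReal.coe_ne_top
  have h3 := ENNReal.toReal_mono (ENNReal.rpow_ne_top_of_nonneg (by norm_num) hfin) h2
  calc ∑ k ∈ Finset.range K, ‖f (t (k + 1)) - f (t k)‖ ^ 2 = X.toReal := by
        rw [hX, ENNReal.toReal_sum hXne]
        refine Finset.sum_congr rfl fun k _ => ?_
        rw [← ENNReal.toReal_rpow, ENNReal.coe_toReal, coe_nnnorm,
          ← Real.rpow_natCast _ 2]
        norm_num
    _ ≤ ((pVariationNorm 2 0 T f) ^ (2:ℝ)).toReal := h3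
    _ = (pVariationNorm 2 0 T f).toReal ^ 2 := by
        rw [← ENNReal.toReal_rpow, ← Real.rpow_natCast _ 2]; norm_num

set_option maxHeartbeats 1000000 in
lemma L1 {H : Type*} [NormedAddCommGroup H] (T : ℝ) (hT : 0 < T) (f : ℝ → H)
    (hf : ContinuousOn f (Set.Icc 0 T)) (hfin : pVariationNorm 2 0 T f ≠ ⊤)
    (h : ℝ) (hh0 : 0 < h) (hhT : h < T) :
    (∫ t in (0:ℝ)..(T - h), ‖f (t + h) - f t‖)
      ≤ Real.sqrt T * Real.sqrt h * (pVariationNorm 2 0 T f).toReal := by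
  set S := (pVariationNorm 2 0 T f).toReal with hSdef
  have hS0 : 0 ≤ S := ENNReal.toReal_nonneg
  have hTh : 0 ≤ T - h := le_of_lt (sub_pos.2 hhT)
  set Φ : ℝ → ℝ := fun t => ‖f (t + h) - f t‖ with hΦdef
  set I : Set ℝ := Set.Icc 0 (T - h) with hIdef
  set ψ : ℝ → ℝ := I.indicator Φ with hψdef
  have hsub1 : ∀ x ∈ I, x + h ∈ Set.Icc 0 T := by
    rintro x ⟨h1, h2⟩; constructor <;> [linarith; linarith]
  have hsub2 : I ⊆ Set.Icc 0 T := by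
    rintro x ⟨h1, h2⟩; constructor <;> [linarith; linarith]
  have hΦc : ContinuousOn Φ I := by
    apply ContinuousOn.norm
    exact (hf.comp (continuous_add_right h).continuousOn hsub1).sub (hf.mono hsub2)
  have hΦint : IntegrableOn Φ I := hΦc.integrableOn_compact isCompact_Icc
  have hψint : Integrable ψ := hΦint.integrable_indicator measurableSet_Icc
  have hψnn : ∀ x, 0 ≤ ψ x := fun x => Set.indicator_nonneg (fun y _ => norm_nonneg _) x
  set N : ℕ := ⌈T / h⌉₊ with hNdef
  have hTN : T ≤ N * h := by
    have := Nat.le_ceil (T / h)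
    calc T = (T / h) * h := by field_simp
      _ ≤ N * h := by nlinarith
  have hC : ∀ s ∈ Set.Icc (0:ℝ) h,
      (∑ k ∈ Finset.range N, ψ (s + k * h)) ≤ Real.sqrt (T / h) * S := by
    intro s hs
    obtain ⟨hs0, hsh⟩ := hs
    have hRHS0 : 0 ≤ Real.sqrt (T / h) * S := mul_nonneg (Real.sqrt_nonneg _) hS0
    by_cases hsT : s ≤ T - h
    · set m : ℕ := ⌊(T - h - s) / h⌋₊ + 1 with hmdef
      have hfl : (⌊(T - h - s) / h⌋₊ : ℝ) ≤ (T - h - s) / h :=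
        Nat.floor_le (div_nonneg (by linarith) hh0.le)
      have hmh : (m : ℝ) * h ≤ T - s := by
        have : (m : ℝ) = (⌊(T - h - s) / h⌋₊ : ℝ) + 1 := by push_cast [hmdef]; ring
        rw [this]
        have := (le_div_iff₀ hh0).1 hfl
        nlinarith
      have hmem : ∀ k < m, s + k * h ∈ I := by
        intro k hk
        have hk' : (k:ℝ) ≤ (⌊(T - h - s) / h⌋₊ : ℝ) := by exact_mod_cast Nat.lt_succ_iff.1 hk
        have hkh : (k:ℝ) * h ≤ T - h - s := (le_div_iff₀ hh0).1 (hk'.trans hfl)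
        constructor
        · positivity
        · linarith
      have hnot : ∀ k, m ≤ k → s + k * h ∉ I := by
        intro k hk hmem'
        obtain ⟨_, h2⟩ := hmem'
        have : (T - h - s) / h < (k:ℝ) := by
          have := (Nat.floor_lt (div_nonneg (by linarith) hh0.le)).1 (Nat.lt_of_lt_of_le (Nat.lt_succ_self _) hk)
          exact this
        have : T - h - s < k * h := (div_lt_iff₀ hh0).1 this
        linarith
      have hmN : m ≤ N := by
        have h1 : (m:ℝ) * h ≤ T := by linarith
        have h2 : (m:ℝ) ≤ T / h := (le_div_iff₀ hh0).2 h1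
        have := h2.trans (Nat.le_ceil (T/h))
        exact_mod_cast this
      have hsum : (∑ k ∈ Finset.range N, ψ (s + k * h))
          = ∑ k ∈ Finset.range m, Φ (s + k * h) := by
        rw [← Finset.sum_subset (Finset.range_subset_range.2 hmN)
          (fun k _ hk => Set.indicator_of_notMem (hnot k (by simpa using hk)) Φ)]
        exact Finset.sum_congr rfl fun k hk =>
          Set.indicator_of_mem (hmem k (Finset.mem_range.1 hk)) Φ
      rw [hsum]
      -- Cauchy-Schwarz
      have hcs := Finset.sum_mul_sq_le_sq_mul_sq (Finset.range m)
        (fun _ => (1:ℝ)) (fun k => Φ (s + k * h))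
      simp only [one_mul, one_pow, Finset.sum_const, Finset.card_range, nsmul_eq_mul,
        mul_one] at hcs
      have hsq : ∑ k ∈ Finset.range m, Φ (s + k * h) ^ 2 ≤ S ^ 2 := by
        have := sum_sq_le_pvar T f hfin (t := fun k => s + k * h) (K := m)
          (fun a _ b _ hab => by
            have : (a:ℝ) < b := by exact_mod_cast hab
            show s + (a:ℝ) * h < s + (b:ℝ) * h
            nlinarith)
          (fun k hk => by
            have hkm : (k:ℝ) ≤ m := by exact_mod_cast hk
            have hkh : (k:ℝ) * h ≤ (m:ℝ) * h := by nlinarith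
            refine ⟨?_, ?_⟩
            · show (0:ℝ) ≤ s + (k:ℝ) * h
              positivity
            · show s + (k:ℝ) * h ≤ T
              linarith)
        simpa [hΦdef, add_mul, one_mul, add_assoc] using this
      have hmT : (m:ℝ) ≤ T / h := by
        rw [le_div_iff₀ hh0]; linarith
      have hsnn : 0 ≤ ∑ k ∈ Finset.range m, Φ (s + k * h) :=
        Finset.sum_nonneg fun _ _ => norm_nonneg _
      nlinarith [Real.sq_sqrt (le_trans (by positivity : (0:ℝ) ≤ (m:ℝ)) hmT :
         (0:ℝ) ≤ T / h), Real.sqrt_nonneg (T / h),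
         Real.sqrt_le_sqrt hmT, Real.sqrt_nonneg ((m:ℝ)),
         Real.sq_sqrt (by positivity : (0:ℝ) ≤ (m:ℝ)),
         mul_le_mul_of_nonneg_right (Real.sqrt_le_sqrt hmT) hS0]
    · have : ∀ k ∈ Finset.range N, ψ (s + k * h) = 0 := by
        intro k _
        apply Set.indicator_of_notMem
        intro hmem'
        obtain ⟨_, h2⟩ := hmem'
        have : (0:ℝ) ≤ (k:ℝ) * h := by positivity
        have : T - h < s + k * h := by push_neg at hsT; linarith
        linarith
      rw [Finset.sum_congr rfl this]
      simpa using hRHS0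
  -- chain of integral equalities
  have step1 : (∫ t in (0:ℝ)..(T - h), Φ t) = ∫ t in (0:ℝ)..(T - h), ψ t := by
    refine intervalIntegral.integral_congr fun x hx => ?_
    rw [Set.uIcc_of_le hTh] at hx
    exact (Set.indicator_of_mem hx Φ).symm
  have hψii : ∀ a b : ℝ, IntervalIntegrable ψ volume a b := fun a b =>
    hψint.intervalIntegrable
  have step2 : (∫ t in (0:ℝ)..(T - h), ψ t) = ∫ t in (0:ℝ)..((N:ℝ) * h), ψ t := by
    have hzero : (∫ t in (T - h)..((N:ℝ) * h), ψ t) = 0 := by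
      rw [intervalIntegral.integral_of_le (by linarith)]
      rw [setIntegral_congr_fun measurableSet_Ioc
        (fun x hx => Set.indicator_of_notMem (fun hm => by
          obtain ⟨hx1, _⟩ := hx; obtain ⟨_, hm2⟩ := hm; exact absurd hm2 (not_le.2 hx1)) Φ)]
      simp
    rw [← intervalIntegral.integral_add_adjacent_intervals (hψii 0 (T - h))
      (hψii (T - h) ((N:ℝ) * h)), hzero, add_zero]
  set a : ℕ → ℝ := fun k => (k:ℝ) * h with hadef
  have step3 : (∫ t in (0:ℝ)..((N:ℝ) * h), ψ t)
      = ∑ k ∈ Finset.range N, ∫ t in (a k)..(a (k+1)), ψ t := by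
    rw [intervalIntegral.sum_integral_adjacent_intervals (a := a) (fun k _ => hψii _ _)]
    have h0 : a 0 = 0 := by simp [hadef]
    have hN : a N = (N:ℝ) * h := rfl
    rw [h0, hN]
  have step4 : ∀ k : ℕ, (∫ t in (a k)..(a (k+1)), ψ t)
      = ∫ s in (0:ℝ)..h, ψ (s + k * h) := by
    intro k
    rw [intervalIntegral.integral_comp_add_right ψ ((k:ℝ) * h)]
    have h1 : (0:ℝ) + (k:ℝ) * h = a k := by simp [hadef]
    have h2 : h + (k:ℝ) * h = a (k+1) := by push_cast [hadef]; ring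
    rw [h1, h2]
  have step5 : ∑ k ∈ Finset.range N, (∫ s in (0:ℝ)..h, ψ (s + k * h))
      = ∫ s in (0:ℝ)..h, ∑ k ∈ Finset.range N, ψ (s + k * h) := by
    rw [intervalIntegral.integral_finset_sum]
    intro k _
    exact (hψint.comp_add_right ((k:ℝ) * h)).intervalIntegrable
  have step6 : (∫ s in (0:ℝ)..h, ∑ k ∈ Finset.range N, ψ (s + k * h))
      ≤ ∫ _ in (0:ℝ)..h, Real.sqrt (T / h) * S := by
    have h1 : IntervalIntegrable (fun s => ∑ k ∈ Finset.range N, ψ (s + k * h)) volume 0 h := by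
      have h2 := IntervalIntegrable.sum (μ := volume) (a := (0:ℝ)) (b := h) (Finset.range N)
        (f := fun k s => ψ (s + k * h))
        (fun k _ => (hψint.comp_add_right ((k:ℝ) * h)).intervalIntegrable)
      have h3 : (∑ k ∈ Finset.range N, fun s => ψ (s + (k:ℝ) * h))
          = fun s => ∑ k ∈ Finset.range N, ψ (s + k * h) := by
        ext s; simp
      rwa [h3] at h2
    exact intervalIntegral.integral_mono_on hh0.le h1 intervalIntegrable_const hC
  have step7 : (∫ _ in (0:ℝ)..h, Real.sqrt (T / h) * S) = Real.sqrt T * Real.sqrt h * S := by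
    rw [intervalIntegral.integral_const, smul_eq_mul, sub_zero, Real.sqrt_div hT.le]
    have h1 : h * (Real.sqrt T / Real.sqrt h * S) = Real.sqrt T * (h / Real.sqrt h) * S := by
      ring
    rw [h1, Real.div_sqrt]
  calc (∫ t in (0:ℝ)..(T - h), ‖f (t + h) - f t‖) = ∫ t in (0:ℝ)..(T - h), Φ t := rfl
    _ = ∫ t in (0:ℝ)..(T - h), ψ t := step1
    _ = ∫ t in (0:ℝ)..((N:ℝ) * h), ψ t := step2
    _ = ∑ k ∈ Finset.range N, ∫ t in (a k)..(a (k+1)), ψ t := step3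
    _ = ∑ k ∈ Finset.range N, ∫ s in (0:ℝ)..h, ψ (s + k * h) :=
        Finset.sum_congr rfl fun k _ => step4 k
    _ = ∫ s in (0:ℝ)..h, ∑ k ∈ Finset.range N, ψ (s + k * h) := step5
    _ ≤ ∫ _ in (0:ℝ)..h, Real.sqrt (T / h) * S := step6
    _ = Real.sqrt T * Real.sqrt h * S := step7


set_option maxHeartbeats 1000000 in
/-- for continuous `f, g : [0,T] → H` of finite `2`-variation and `0 < h < T`,
`∫_0^{T-h} |⟨f(t+h), g(t+h)⟩ - ⟨f(t), g(t)⟩| dt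
  ≤ 2^{3/2} T^{1/2} h^{1/2} ( ‖f‖_{V²} sup_{[0,T]} ‖g‖ + ‖g‖_{V²} sup_{[0,T]} ‖f‖ )`. -/
theorem stmt10 {H : Type*} [NormedAddCommGroup H] [InnerProductSpace ℂ H] [CompleteSpace H]
    (T : ℝ) (hT : 0 < T)
    (f g : ℝ → H)
    (hf : ContinuousOn f (Set.Icc 0 T)) (hg : ContinuousOn g (Set.Icc 0 T))
    (hffin : pVariationNorm 2 0 T f ≠ ⊤) (hgfin : pVariationNorm 2 0 T g ≠ ⊤)
    (h : ℝ) (hh0 : 0 < h) (hhT : h < T) :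
    (∫ t in (0:ℝ)..(T - h),
        ‖(inner ℂ (f (t + h)) (g (t + h)) : ℂ) - (inner ℂ (f t) (g t) : ℂ)‖)
      ≤ 2 ^ ((3:ℝ) / 2) * T ^ ((1:ℝ) / 2) * h ^ ((1:ℝ) / 2) *
        ((pVariationNorm 2 0 T f).toReal * (⨆ s : Set.Icc (0:ℝ) T, ‖g (s : ℝ)‖)
          + (pVariationNorm 2 0 T g).toReal * (⨆ s : Set.Icc (0:ℝ) T, ‖f (s : ℝ)‖)) := by
  have hTh : 0 ≤ T - h := le_of_lt (sub_pos.2 hhT)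
  set Sf := (pVariationNorm 2 0 T f).toReal with hSf
  set Sg := (pVariationNorm 2 0 T g).toReal with hSg
  have hSf0 : 0 ≤ Sf := ENNReal.toReal_nonneg
  have hSg0 : 0 ≤ Sg := ENNReal.toReal_nonneg
  set Mf := ⨆ s : Set.Icc (0:ℝ) T, ‖f (s : ℝ)‖ with hMf
  set Mg := ⨆ s : Set.Icc (0:ℝ) T, ‖g (s : ℝ)‖ with hMg
  have hrange : ∀ v : ℝ → H, Set.range (fun s : Set.Icc (0:ℝ) T => ‖v (s:ℝ)‖)
      = (fun t => ‖v t‖) '' Set.Icc 0 T := by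
    intro v
    ext y
    constructor
    · rintro ⟨⟨x, hx⟩, rfl⟩; exact ⟨x, hx, rfl⟩
    · rintro ⟨x, hx, rfl⟩; exact ⟨⟨x, hx⟩, rfl⟩
  have hbddf : BddAbove (Set.range fun s : Set.Icc (0:ℝ) T => ‖f (s:ℝ)‖) := by
    rw [hrange f]; exact (isCompact_Icc.image_of_continuousOn hf.norm).bddAbove
  have hbddg : BddAbove (Set.range fun s : Set.Icc (0:ℝ) T => ‖g (s:ℝ)‖) := by
    rw [hrange g]; exact (isCompact_Icc.image_of_continuousOn hg.norm).bddAbove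
  have hfle : ∀ t ∈ Set.Icc (0:ℝ) T, ‖f t‖ ≤ Mf := fun t ht => le_ciSup hbddf ⟨t, ht⟩
  have hgle : ∀ t ∈ Set.Icc (0:ℝ) T, ‖g t‖ ≤ Mg := fun t ht => le_ciSup hbddg ⟨t, ht⟩
  have hMf0 : 0 ≤ Mf := le_trans (norm_nonneg _) (hfle 0 ⟨le_rfl, hT.le⟩)
  have hMg0 : 0 ≤ Mg := le_trans (norm_nonneg _) (hgle 0 ⟨le_rfl, hT.le⟩)
  have hsub1 : ∀ x ∈ Set.Icc (0:ℝ) (T - h), x + h ∈ Set.Icc 0 T := by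
    rintro x ⟨h1, h2⟩; exact ⟨by linarith, by linarith⟩
  have hsub2 : Set.Icc (0:ℝ) (T - h) ⊆ Set.Icc 0 T := by
    rintro x ⟨h1, h2⟩; exact ⟨by linarith, by linarith⟩
  -- pointwise bound
  have hpt : ∀ t ∈ Set.Icc (0:ℝ) (T - h),
      ‖(inner ℂ (f (t + h)) (g (t + h)) : ℂ) - (inner ℂ (f t) (g t) : ℂ)‖
        ≤ Mg * ‖f (t + h) - f t‖ + Mf * ‖g (t + h) - g t‖ := by
    intro t ht
    have hsplit : (inner ℂ (f (t + h)) (g (t + h)) : ℂ) - (inner ℂ (f t) (g t) : ℂ)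
        = (inner ℂ (f (t + h) - f t) (g (t + h)) : ℂ) + (inner ℂ (f t) (g (t + h) - g t) : ℂ) := by
      rw [inner_sub_left, inner_sub_right]; ring
    rw [hsplit]
    refine le_trans (norm_add_le _ _) ?_
    have h1 : ‖(inner ℂ (f (t + h) - f t) (g (t + h)) : ℂ)‖ ≤ ‖f (t + h) - f t‖ * ‖g (t + h)‖ :=
      norm_inner_le_norm _ _
    have h2 : ‖(inner ℂ (f t) (g (t + h) - g t) : ℂ)‖ ≤ ‖f t‖ * ‖g (t + h) - g t‖ :=
      norm_inner_le_norm _ _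
    have h3 : ‖g (t + h)‖ ≤ Mg := hgle _ (hsub1 t ht)
    have h4 : ‖f t‖ ≤ Mf := hfle _ (hsub2 ht)
    have h5 : ‖f (t + h) - f t‖ * ‖g (t + h)‖ ≤ Mg * ‖f (t + h) - f t‖ := by
      rw [mul_comm]; exact mul_le_mul_of_nonneg_right h3 (norm_nonneg _)
    have h6 : ‖f t‖ * ‖g (t + h) - g t‖ ≤ Mf * ‖g (t + h) - g t‖ :=
      mul_le_mul_of_nonneg_right h4 (norm_nonneg _)
    linarith
  -- integrability
  have hΔf : ContinuousOn (fun t => ‖f (t + h) - f t‖) (Set.Icc 0 (T - h)) :=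
    ((hf.comp (continuous_add_right h).continuousOn hsub1).sub (hf.mono hsub2)).norm
  have hΔg : ContinuousOn (fun t => ‖g (t + h) - g t‖) (Set.Icc 0 (T - h)) :=
    ((hg.comp (continuous_add_right h).continuousOn hsub1).sub (hg.mono hsub2)).norm
  have hiif : IntervalIntegrable (fun t => ‖f (t + h) - f t‖) volume 0 (T - h) :=
    hΔf.intervalIntegrable_of_Icc hTh
  have hiig : IntervalIntegrable (fun t => ‖g (t + h) - g t‖) volume 0 (T - h) :=
    hΔg.intervalIntegrable_of_Icc hTh
  have hlhsc : ContinuousOn (fun t =>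
      ‖(inner ℂ (f (t + h)) (g (t + h)) : ℂ) - (inner ℂ (f t) (g t) : ℂ)‖) (Set.Icc 0 (T - h)) := by
    apply ContinuousOn.norm
    apply ContinuousOn.sub
    · exact ContinuousOn.inner (hf.comp (continuous_add_right h).continuousOn hsub1)
        (hg.comp (continuous_add_right h).continuousOn hsub1)
    · exact ContinuousOn.inner (hf.mono hsub2) (hg.mono hsub2)
  have hlhsint : IntervalIntegrable (fun t =>
      ‖(inner ℂ (f (t + h)) (g (t + h)) : ℂ) - (inner ℂ (f t) (g t) : ℂ)‖) volume 0 (T - h) :=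
    hlhsc.intervalIntegrable_of_Icc hTh
  have hrhsint : IntervalIntegrable
      (fun t => Mg * ‖f (t + h) - f t‖ + Mf * ‖g (t + h) - g t‖) volume 0 (T - h) :=
    (hiif.const_mul Mg).add (hiig.const_mul Mf)
  have step1 : (∫ t in (0:ℝ)..(T - h),
        ‖(inner ℂ (f (t + h)) (g (t + h)) : ℂ) - (inner ℂ (f t) (g t) : ℂ)‖)
      ≤ ∫ t in (0:ℝ)..(T - h), (Mg * ‖f (t + h) - f t‖ + Mf * ‖g (t + h) - g t‖) :=
    intervalIntegral.integral_mono_on hTh hlhsint hrhsint hpt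
  have step2 : (∫ t in (0:ℝ)..(T - h), (Mg * ‖f (t + h) - f t‖ + Mf * ‖g (t + h) - g t‖))
      = Mg * (∫ t in (0:ℝ)..(T - h), ‖f (t + h) - f t‖)
        + Mf * (∫ t in (0:ℝ)..(T - h), ‖g (t + h) - g t‖) := by
    rw [intervalIntegral.integral_add (hiif.const_mul Mg) (hiig.const_mul Mf),
      intervalIntegral.integral_const_mul, intervalIntegral.integral_const_mul]
  have hL1f := L1 T hT f hf hffin h hh0 hhT
  have hL1g := L1 T hT g hg hgfin h hh0 hhT
  have step3 : Mg * (∫ t in (0:ℝ)..(T - h), ‖f (t + h) - f t‖)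
        + Mf * (∫ t in (0:ℝ)..(T - h), ‖g (t + h) - g t‖)
      ≤ Real.sqrt T * Real.sqrt h * (Sf * Mg + Sg * Mf) := by
    have h1 := mul_le_mul_of_nonneg_left hL1f hMg0
    have h2 := mul_le_mul_of_nonneg_left hL1g hMf0
    nlinarith
  have hfinal : Real.sqrt T * Real.sqrt h * (Sf * Mg + Sg * Mf)
      ≤ 2 ^ ((3:ℝ) / 2) * T ^ ((1:ℝ) / 2) * h ^ ((1:ℝ) / 2) * (Sf * Mg + Sg * Mf) := by
    have hB : 0 ≤ Sf * Mg + Sg * Mf := by positivity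
    have h1 : Real.sqrt T = T ^ ((1:ℝ) / 2) := Real.sqrt_eq_rpow T
    have h2 : Real.sqrt h = h ^ ((1:ℝ) / 2) := Real.sqrt_eq_rpow h
    have h3 : (1:ℝ) ≤ 2 ^ ((3:ℝ) / 2) := by
      rw [show (1:ℝ) = 2 ^ (0:ℝ) from (Real.rpow_zero 2).symm]
      exact Real.rpow_le_rpow_of_exponent_le one_le_two (by norm_num)
    rw [h1, h2]
    have h4 : 0 ≤ T ^ ((1:ℝ) / 2) * h ^ ((1:ℝ) / 2) * (Sf * Mg + Sg * Mf) := by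
      have := Real.rpow_nonneg hT.le ((1:ℝ)/2)
      have := Real.rpow_nonneg hh0.le ((1:ℝ)/2)
      positivity
    nlinarith
  calc (∫ t in (0:ℝ)..(T - h),
        ‖(inner ℂ (f (t + h)) (g (t + h)) : ℂ) - (inner ℂ (f t) (g t) : ℂ)‖)
      ≤ ∫ t in (0:ℝ)..(T - h), (Mg * ‖f (t + h) - f t‖ + Mf * ‖g (t + h) - g t‖) := step1
    _ = Mg * (∫ t in (0:ℝ)..(T - h), ‖f (t + h) - f t‖)
        + Mf * (∫ t in (0:ℝ)..(T - h), ‖g (t + h) - g t‖) := step2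
    _ ≤ Real.sqrt T * Real.sqrt h * (Sf * Mg + Sg * Mf) := step3
    _ ≤ _ := hfinal
end
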